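/- arXiv:1607.08902 — 10 statements merged into one kernel-verified Lean document; each statement's English description precedes it below -/
import Mathlib

section
/- Let ν, κ ∈ ℝ with ν² ≠ κ² and κ ≠ 0, and let β ∈ ℂ satisfy β² = κ² − ν² and β ≠ −κ. Define Ψ_M(r) := κ·r^β·(κ+β, −ν) and Ψ_U(r) := r^{−β}·(ν, −κ−β) for r > 0. Then Ψ_M and Ψ_U both satisfy d^{ν,κ}Ψ = 0 on (0,∞), and every differentiable function f : (0,∞) → ℂ² with d^{ν,κ}f = 0 on (0,∞) is of the form f = a·Ψ_M + b·Ψ_U for some constants a, b ∈ ℂ. -/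
open Complex

/-- `IsDiracSol ν κ lam f₁ f₂` says that `f = (f₁, f₂) : (0,∞) → ℂ²` is differentiable on
`(0,∞)` and satisfies the Coulomb–Dirac equation `d^{ν,κ} f = lam • f` there. -/
def IsDiracSol (ν κ : ℝ) (lam : ℂ) (f₁ f₂ : ℝ → ℂ) : Prop :=
  ∀ r : ℝ, 0 < r →
    DifferentiableAt ℝ f₁ r ∧ DifferentiableAt ℝ f₂ r ∧
    -((ν : ℂ) / (r : ℂ)) * f₁ r - deriv f₂ r - ((κ : ℂ) / (r : ℂ)) * f₂ r = lam * f₁ r ∧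
    deriv f₁ r - ((κ : ℂ) / (r : ℂ)) * f₁ r - ((ν : ℂ) / (r : ℂ)) * f₂ r = lam * f₂ r

/-- For `r > 0` and `β ∈ ℂ`, `r^β := exp (β · ln r)`. -/
noncomputable def rpowC (r : ℝ) (β : ℂ) : ℂ := Complex.exp (β * Real.log r)

/-
The Wronskian `f₁ g₂ - f₂ g₁` of two solutions of `d^{ν,κ} f = λ f` is constant on `(0,∞)`,
because the coefficient matrix of the system `f' = A(r) f` is trace-free. The power ansatz
`r^γ c` reduces the equation to a 2×2 kernel problem, solved by `Ψ_M` (γ = β) and `Ψ_U`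
(γ = −β), and their Wronskian is the constant `-2κβ(β+κ)`, nonzero under the hypotheses.
Cramer's rule then writes any solution `f` as a combination of `Ψ_M` and `Ψ_U` whose
coefficients are the Wronskians of `f` with `Ψ_U` and `Ψ_M`, hence constant.
-/

lemma hasDerivAt_rpowC (γ : ℂ) {r : ℝ} (hr : 0 < r) :
    HasDerivAt (fun s => rpowC s γ) (γ / r * rpowC r γ) r := by
  have hlog : HasDerivAt (fun s : ℝ => ((Real.log s : ℝ) : ℂ)) ((r⁻¹ : ℝ) : ℂ) r :=
    (Real.hasDerivAt_log hr.ne').ofReal_comp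
  convert (hlog.const_mul γ).cexp using 1
  · simp only [rpowC]
  · simp only [rpowC, ofReal_inv]
    ring

@[simp]
lemma rpowC_one (γ : ℂ) : rpowC 1 γ = 1 := by
  simp [rpowC]

lemma isDiracSol_rpowC_mul {ν κ : ℝ} {γ c₁ c₂ : ℂ}
    (h₁ : (ν : ℂ) * c₁ + (γ + κ) * c₂ = 0) (h₂ : (γ - κ) * c₁ - ν * c₂ = 0) :
    IsDiracSol ν κ 0 (fun r => rpowC r γ * c₁) (fun r => rpowC r γ * c₂) := by
  intro r hr
  have hr' : (r : ℂ) ≠ 0 := by exact_mod_cast hr.ne'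
  have hd₁ := (hasDerivAt_rpowC γ hr).mul_const c₁
  have hd₂ := (hasDerivAt_rpowC γ hr).mul_const c₂
  refine ⟨hd₁.differentiableAt, hd₂.differentiableAt, ?_, ?_⟩
  · rw [hd₂.deriv]
    field_simp
    linear_combination -rpowC r γ * h₁
  · rw [hd₁.deriv]
    field_simp
    linear_combination rpowC r γ * h₂

def wronskian (f₁ f₂ g₁ g₂ : ℝ → ℂ) (r : ℝ) : ℂ := f₁ r * g₂ r - f₂ r * g₁ r

namespace IsDiracSol

variable {ν κ : ℝ} {lam : ℂ} {f₁ f₂ g₁ g₂ : ℝ → ℂ}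

lemma deriv_fst (hf : IsDiracSol ν κ lam f₁ f₂) {r : ℝ} (hr : 0 < r) :
    deriv f₁ r = κ / r * f₁ r + (ν / r + lam) * f₂ r := by
  linear_combination (hf r hr).2.2.2

lemma deriv_snd (hf : IsDiracSol ν κ lam f₁ f₂) {r : ℝ} (hr : 0 < r) :
    deriv f₂ r = -(ν / r + lam) * f₁ r - κ / r * f₂ r := by
  linear_combination -(hf r hr).2.2.1

lemma hasDerivAt_wronskian (hf : IsDiracSol ν κ lam f₁ f₂) (hg : IsDiracSol ν κ lam g₁ g₂)
    {r : ℝ} (hr : 0 < r) : HasDerivAt (wronskian f₁ f₂ g₁ g₂) 0 r := by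
  obtain ⟨hf₁, hf₂, -⟩ := hf r hr
  obtain ⟨hg₁, hg₂, -⟩ := hg r hr
  refine ((hf₁.hasDerivAt.mul hg₂.hasDerivAt).sub
    (hf₂.hasDerivAt.mul hg₁.hasDerivAt)).congr_deriv ?_
  rw [hf.deriv_fst hr, hf.deriv_snd hr, hg.deriv_fst hr, hg.deriv_snd hr]
  ring

lemma wronskian_eq (hf : IsDiracSol ν κ lam f₁ f₂) (hg : IsDiracSol ν κ lam g₁ g₂)
    {r : ℝ} (hr : 0 < r) : wronskian f₁ f₂ g₁ g₂ r = wronskian f₁ f₂ g₁ g₂ 1 :=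
  isOpen_Ioi.is_const_of_deriv_eq_zero isPreconnected_Ioi
    (fun _ hs => (hf.hasDerivAt_wronskian hg hs).differentiableAt.differentiableWithinAt)
    (fun _ hs => (hf.hasDerivAt_wronskian hg hs).deriv) hr (Set.mem_Ioi.mpr one_pos)

theorem exists_eq_add {m₁ m₂ u₁ u₂ : ℝ → ℂ} (hm : IsDiracSol ν κ lam m₁ m₂)
    (hu : IsDiracSol ν κ lam u₁ u₂) (hmu : wronskian m₁ m₂ u₁ u₂ 1 ≠ 0)
    (hf : IsDiracSol ν κ lam f₁ f₂) :
    ∃ a b : ℂ, ∀ r : ℝ, 0 < r →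
      f₁ r = a * m₁ r + b * u₁ r ∧ f₂ r = a * m₂ r + b * u₂ r := by
  refine ⟨wronskian f₁ f₂ u₁ u₂ 1 / wronskian m₁ m₂ u₁ u₂ 1,
    -wronskian f₁ f₂ m₁ m₂ 1 / wronskian m₁ m₂ u₁ u₂ 1, fun r hr => ?_⟩
  have hW := mul_inv_cancel₀ hmu
  rw [← hm.wronskian_eq hu hr] at hW
  rw [← hf.wronskian_eq hu hr, ← hf.wronskian_eq hm hr, ← hm.wronskian_eq hu hr]
  simp only [wronskian] at hW ⊢
  constructor
  · linear_combination -f₁ r * hW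
  · linear_combination -f₂ r * hW

end IsDiracSol

/-- For `ν² ≠ κ²`, `κ ≠ 0`, `β² = κ² − ν²`, `β ≠ −κ`, the functions
`Ψ_M(r) = κ r^β (κ+β, −ν)` and `Ψ_U(r) = r^{−β} (ν, −κ−β)` solve `d^{ν,κ}Ψ = 0` on `(0,∞)`,
and every differentiable solution of `d^{ν,κ}f = 0` on `(0,∞)` is a linear combination
`f = a Ψ_M + b Ψ_U`. -/
theorem fundamental_solutions_generic (ν κ : ℝ) (hne : ν ^ 2 ≠ κ ^ 2) (hκ : κ ≠ 0)
    (β : ℂ) (hβ : β ^ 2 = (κ : ℂ) ^ 2 - (ν : ℂ) ^ 2) (hβκ : β ≠ -(κ : ℂ)) :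
    IsDiracSol ν κ 0 (fun r => (κ : ℂ) * rpowC r β * ((κ : ℂ) + β))
      (fun r => (κ : ℂ) * rpowC r β * (-(ν : ℂ))) ∧
    IsDiracSol ν κ 0 (fun r => rpowC r (-β) * (ν : ℂ))
      (fun r => rpowC r (-β) * (-(κ : ℂ) - β)) ∧
    ∀ f₁ f₂ : ℝ → ℂ, IsDiracSol ν κ 0 f₁ f₂ →
      ∃ a b : ℂ, ∀ r : ℝ, 0 < r →
        f₁ r = a * ((κ : ℂ) * rpowC r β * ((κ : ℂ) + β)) + b * (rpowC r (-β) * (ν : ℂ)) ∧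
        f₂ r = a * ((κ : ℂ) * rpowC r β * (-(ν : ℂ))) + b * (rpowC r (-β) * (-(κ : ℂ) - β)) := by
  have hM : IsDiracSol ν κ 0 (fun r => (κ : ℂ) * rpowC r β * ((κ : ℂ) + β))
      (fun r => (κ : ℂ) * rpowC r β * (-(ν : ℂ))) := by
    convert isDiracSol_rpowC_mul (ν := ν) (κ := κ) (γ := β) (c₁ := κ * (κ + β)) (c₂ := -κ * ν)
      (by ring) (by linear_combination (κ : ℂ) * hβ) using 1 <;> funext r <;> ring
  have hU : IsDiracSol ν κ 0 (fun r => rpowC r (-β) * (ν : ℂ))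
      (fun r => rpowC r (-β) * (-(κ : ℂ) - β)) :=
    isDiracSol_rpowC_mul (by linear_combination hβ) (by ring)
  refine ⟨hM, hU, fun f₁ f₂ hf => hM.exists_eq_add hU ?_ hf⟩
  have hβ₀ : β ≠ 0 := by
    rintro rfl
    exact hne (by exact_mod_cast (by linear_combination hβ : (ν : ℂ) ^ 2 = κ ^ 2))
  have hβκ' : β + κ ≠ 0 := fun h => hβκ (eq_neg_of_add_eq_zero_left h)
  calc wronskian _ _ _ _ 1 = -2 * κ * β * (β + κ) := by
        simp only [wronskian, rpowC_one]
        linear_combination (κ : ℂ) * hβ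
    _ ≠ 0 := by simp [hκ, hβ₀, hβκ']
end

section
/- Let ν, κ ∈ ℝ with ν² = κ² ≠ 0. Define Ψ_M(r) := (−ν, κ) (constant) and Ψ_U(r) := (ln r)·(−ν, κ) − (1/(2κ))·(ν, κ) for r > 0. Then Ψ_M and Ψ_U both satisfy d^{ν,κ}Ψ = 0 on (0,∞), and every differentiable function f : (0,∞) → ℂ² with d^{ν,κ}f = 0 on (0,∞) is of the form f = a·Ψ_M + b·Ψ_U for some constants a, b ∈ ℂ. -/
/-! For `ν² = κ²` the combination `ν f₁ + κ f₂` has derivative `(ν² − κ²) f₂ / r = 0`, so it is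
a first integral of `d^{ν,κ} f = 0`. It vanishes on `Ψ_M` and equals `−κ` on `Ψ_U`, so subtracting
a multiple of `Ψ_U` from a solution leaves one with vanishing first integral. For that one
`f₂′ = −(ν f₁ + κ f₂) / r = 0`, and `κ f₁ + ν f₂ = 0` as well (multiply by `κ` and use `κ² = ν²`),
so it is a constant multiple of `Ψ_M`. -/

open Complex

theorem exists_forall_pos_eq_of_hasDerivAt_zero {E : Type*} [NormedAddCommGroup E]
    [NormedSpace ℝ E] {g : ℝ → E} (hg : ∀ r : ℝ, 0 < r → HasDerivAt g 0 r) :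
    ∃ c, ∀ r : ℝ, 0 < r → g r = c :=
  isOpen_Ioi.exists_is_const_of_deriv_eq_zero isPreconnected_Ioi
    (fun r hr => (hg r hr).differentiableAt.differentiableWithinAt)
    (fun r hr => (hg r hr).deriv)

theorem hasDerivAt_ofReal_log {r : ℝ} (hr : 0 < r) :
    HasDerivAt (fun x : ℝ => (Real.log x : ℂ)) (r : ℂ)⁻¹ r := by
  simpa using (Real.hasDerivAt_log hr.ne').ofReal_comp

section
variable {ν κ : ℝ} {lam : ℂ} {f₁ f₂ g₁ g₂ : ℝ → ℂ}

theorem isDiracSol_iff_hasDerivAt :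
    IsDiracSol ν κ lam f₁ f₂ ↔ ∀ r : ℝ, 0 < r →
      HasDerivAt f₁ (κ / r * f₁ r + ν / r * f₂ r + lam * f₂ r) r ∧
      HasDerivAt f₂ (-(ν / r * f₁ r) - κ / r * f₂ r - lam * f₁ r) r := by
  refine forall₂_congr fun r _ => ⟨fun ⟨h₁, h₂, e₁, e₂⟩ => ⟨?_, ?_⟩, fun ⟨h₁, h₂⟩ => ?_⟩
  · exact h₁.hasDerivAt.congr_deriv (by linear_combination e₂)
  · exact h₂.hasDerivAt.congr_deriv (by linear_combination -e₁)
  · refine ⟨h₁.differentiableAt, h₂.differentiableAt, ?_, ?_⟩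
    · rw [h₂.deriv]; ring
    · rw [h₁.deriv]; ring

theorem isDiracSol_zero_const (heq : ν ^ 2 = κ ^ 2) :
    IsDiracSol ν κ 0 (fun _ => -(ν : ℂ)) (fun _ => (κ : ℂ)) := by
  have heq : (ν : ℂ) ^ 2 = κ ^ 2 := by exact_mod_cast heq
  refine isDiracSol_iff_hasDerivAt.2 fun r hr => ⟨?_, ?_⟩
  · exact (hasDerivAt_const r _).congr_deriv (by ring)
  · have hr : (r : ℂ) ≠ 0 := by exact_mod_cast hr.ne'
    refine (hasDerivAt_const r _).congr_deriv ?_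
    field_simp
    linear_combination -heq

theorem isDiracSol_zero_log (heq : ν ^ 2 = κ ^ 2) (hκ : κ ≠ 0) :
    IsDiracSol ν κ 0 (fun r => (Real.log r : ℂ) * (-(ν : ℂ)) - (1 / (2 * (κ : ℂ))) * (ν : ℂ))
      (fun r => (Real.log r : ℂ) * (κ : ℂ) - (1 / (2 * (κ : ℂ))) * (κ : ℂ)) := by
  have heq : (ν : ℂ) ^ 2 = κ ^ 2 := by exact_mod_cast heq
  have hκ : (κ : ℂ) ≠ 0 := by exact_mod_cast hκ
  refine isDiracSol_iff_hasDerivAt.2 fun r hr => ⟨?_, ?_⟩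
  all_goals
    have hr' : (r : ℂ) ≠ 0 := by exact_mod_cast hr.ne'
    refine (((hasDerivAt_ofReal_log hr).mul_const _).sub_const _).congr_deriv ?_
    field_simp
  · ring
  · linear_combination -(1 + 2 * κ * (Real.log r : ℂ)) * heq

namespace IsDiracSol

theorem add (hf : IsDiracSol ν κ lam f₁ f₂) (hg : IsDiracSol ν κ lam g₁ g₂) :
    IsDiracSol ν κ lam (f₁ + g₁) (f₂ + g₂) := by
  rw [isDiracSol_iff_hasDerivAt] at *
  intro r hr
  obtain ⟨hf₁, hf₂⟩ := hf r hr
  obtain ⟨hg₁, hg₂⟩ := hg r hr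
  exact ⟨(hf₁.add hg₁).congr_deriv (by simp only [Pi.add_apply]; ring),
    (hf₂.add hg₂).congr_deriv (by simp only [Pi.add_apply]; ring)⟩

theorem const_mul (hf : IsDiracSol ν κ lam f₁ f₂) (b : ℂ) :
    IsDiracSol ν κ lam (fun r => b * f₁ r) (fun r => b * f₂ r) := by
  rw [isDiracSol_iff_hasDerivAt] at *
  intro r hr
  obtain ⟨hf₁, hf₂⟩ := hf r hr
  exact ⟨(hf₁.const_mul b).congr_deriv (by ring), (hf₂.const_mul b).congr_deriv (by ring)⟩

theorem exists_firstIntegral_eq (hf : IsDiracSol ν κ 0 f₁ f₂) (heq : ν ^ 2 = κ ^ 2) :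
    ∃ c : ℂ, ∀ r : ℝ, 0 < r → ν * f₁ r + κ * f₂ r = c := by
  have heq : (ν : ℂ) ^ 2 = κ ^ 2 := by exact_mod_cast heq
  refine exists_forall_pos_eq_of_hasDerivAt_zero fun r hr => ?_
  obtain ⟨hf₁, hf₂⟩ := isDiracSol_iff_hasDerivAt.1 hf r hr
  refine ((hf₁.const_mul _).add (hf₂.const_mul _)).congr_deriv ?_
  have hr : (r : ℂ) ≠ 0 := by exact_mod_cast hr.ne'
  field_simp
  linear_combination f₂ r * heq

theorem exists_eq_mul_of_firstIntegral_eq_zero (hf : IsDiracSol ν κ 0 f₁ f₂)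
    (heq : ν ^ 2 = κ ^ 2) (hκ : κ ≠ 0) (h₀ : ∀ r : ℝ, 0 < r → ν * f₁ r + κ * f₂ r = 0) :
    ∃ a : ℂ, ∀ r : ℝ, 0 < r → f₁ r = a * -ν ∧ f₂ r = a * κ := by
  have heq : (ν : ℂ) ^ 2 = κ ^ 2 := by exact_mod_cast heq
  have hκ : (κ : ℂ) ≠ 0 := by exact_mod_cast hκ
  have h₀' : ∀ r : ℝ, 0 < r → κ * f₁ r + ν * f₂ r = 0 := fun r hr =>
    mul_left_cancel₀ hκ (by linear_combination ν * h₀ r hr - f₁ r * heq)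
  obtain ⟨B, hB⟩ : ∃ B : ℂ, ∀ r : ℝ, 0 < r → f₂ r = B := by
    refine exists_forall_pos_eq_of_hasDerivAt_zero fun r hr => ?_
    refine (isDiracSol_iff_hasDerivAt.1 hf r hr).2.congr_deriv ?_
    linear_combination -h₀ r hr / r
  refine ⟨B / κ, fun r hr => ?_⟩
  rw [← hB r hr]
  constructor
  · field_simp
    linear_combination h₀' r hr
  · field_simp

end IsDiracSol

end

/-- For `ν² = κ² ≠ 0`, the functions `Ψ_M(r) = (−ν, κ)` and
`Ψ_U(r) = (ln r)·(−ν, κ) − (1/(2κ))·(ν, κ)` solve `d^{ν,κ}Ψ = 0` on `(0,∞)`, and every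
differentiable solution of `d^{ν,κ}f = 0` on `(0,∞)` is a linear combination of them. -/
theorem fundamental_solutions_degenerate (ν κ : ℝ) (heq : ν ^ 2 = κ ^ 2) (hκ : κ ≠ 0) :
    IsDiracSol ν κ 0 (fun _ => -(ν : ℂ)) (fun _ => (κ : ℂ)) ∧
    IsDiracSol ν κ 0 (fun r => (Real.log r : ℂ) * (-(ν : ℂ)) - (1 / (2 * (κ : ℂ))) * (ν : ℂ))
      (fun r => (Real.log r : ℂ) * (κ : ℂ) - (1 / (2 * (κ : ℂ))) * (κ : ℂ)) ∧
    ∀ f₁ f₂ : ℝ → ℂ, IsDiracSol ν κ 0 f₁ f₂ →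
      ∃ a b : ℂ, ∀ r : ℝ, 0 < r →
        f₁ r = a * (-(ν : ℂ)) +
            b * ((Real.log r : ℂ) * (-(ν : ℂ)) - (1 / (2 * (κ : ℂ))) * (ν : ℂ)) ∧
        f₂ r = a * (κ : ℂ) +
            b * ((Real.log r : ℂ) * (κ : ℂ) - (1 / (2 * (κ : ℂ))) * (κ : ℂ)) := by
  have hΨU := isDiracSol_zero_log heq hκ
  refine ⟨isDiracSol_zero_const heq, hΨU, fun f₁ f₂ hf => ?_⟩
  have heqC : (ν : ℂ) ^ 2 = κ ^ 2 := by exact_mod_cast heq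
  have hκC : (κ : ℂ) ≠ 0 := by exact_mod_cast hκ
  obtain ⟨c, hc⟩ := hf.exists_firstIntegral_eq heq
  obtain ⟨a, ha⟩ := (hf.add (hΨU.const_mul (c / κ))).exists_eq_mul_of_firstIntegral_eq_zero
    heq hκ fun r hr => by
      simp only [Pi.add_apply]
      field_simp
      linear_combination 2 * κ ^ 2 * hc r hr - (c + 2 * c * κ * (Real.log r : ℂ)) * heqC
  refine ⟨a, -c / κ, fun r hr => ?_⟩
  obtain ⟨h₁, h₂⟩ := ha r hr
  simp only [Pi.add_apply] at h₁ h₂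
  constructor
  · linear_combination h₁
  · linear_combination h₂
end

section
/- Let ν, κ ∈ ℝ with κ ≠ 0, and let β ∈ ℂ satisfy β² = κ² − ν² and β ≠ −κ. Let F = (F₁, F₂) : (0,∞) → ℂ² be differentiable, and define G₁ := ((κ+β)/2)·F₁ + (ν/2)·F₂ and G₂ := (ν/2)·F₁ − ((κ+β)/2)·F₂. Then F satisfies the system (−ν/r − 1)·F₁(r) − F₂′(r) − ((β+κ)/r)·F₂(r) = 0 and F₁′(r) + ((β−κ)/r)·F₁(r) − (ν/r + 1)·F₂(r) = 0 for all r > 0 if and only if G₂ = −G₁′ on (0,∞) and G₁ is twice differentiable on (0,∞) with G₁″(r) + (2β/r)·G₁′(r) + (1 + 2ν/r)·G₁(r) = 0 for all r > 0. -/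
open Complex Filter Topology

/-- For `κ ≠ 0`, `β² = κ² − ν²`, `β ≠ −κ`, and differentiable `F = (F₁, F₂) : (0,∞) → ℂ²`,
with `G₁ := ((κ+β)/2)F₁ + (ν/2)F₂` and `G₂ := (ν/2)F₁ − ((κ+β)/2)F₂`, the first-order system
`(−ν/r − 1)F₁ − F₂′ − ((β+κ)/r)F₂ = 0`, `F₁′ + ((β−κ)/r)F₁ − (ν/r + 1)F₂ = 0` on `(0,∞)` is
equivalent to: `G₂ = −G₁′` on `(0,∞)` and `G₁` is twice differentiable on `(0,∞)` with
`G₁″ + (2β/r)G₁′ + (1 + 2ν/r)G₁ = 0`. -/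
theorem dirac_system_reduction (ν κ : ℝ) (hκ : κ ≠ 0)
    (β : ℂ) (hβ : β ^ 2 = (κ : ℂ) ^ 2 - (ν : ℂ) ^ 2) (hβκ : β ≠ -(κ : ℂ))
    (F₁ F₂ : ℝ → ℂ)
    (hF₁ : ∀ r : ℝ, 0 < r → DifferentiableAt ℝ F₁ r)
    (hF₂ : ∀ r : ℝ, 0 < r → DifferentiableAt ℝ F₂ r) :
    (∀ r : ℝ, 0 < r →
        (-((ν : ℂ) / (r : ℂ)) - 1) * F₁ r - deriv F₂ r - ((β + (κ : ℂ)) / (r : ℂ)) * F₂ r = 0 ∧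
        deriv F₁ r + ((β - (κ : ℂ)) / (r : ℂ)) * F₁ r - ((ν : ℂ) / (r : ℂ) + 1) * F₂ r = 0) ↔
      ((∀ r : ℝ, 0 < r →
          ((ν : ℂ) / 2) * F₁ r - (((κ : ℂ) + β) / 2) * F₂ r =
            -deriv (fun t => (((κ : ℂ) + β) / 2) * F₁ t + ((ν : ℂ) / 2) * F₂ t) r) ∧
       (∀ r : ℝ, 0 < r →
          DifferentiableAt ℝ
            (deriv (fun t => (((κ : ℂ) + β) / 2) * F₁ t + ((ν : ℂ) / 2) * F₂ t)) r) ∧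
       (∀ r : ℝ, 0 < r →
          deriv (deriv (fun t => (((κ : ℂ) + β) / 2) * F₁ t + ((ν : ℂ) / 2) * F₂ t)) r +
            (2 * β / (r : ℂ)) *
              deriv (fun t => (((κ : ℂ) + β) / 2) * F₁ t + ((ν : ℂ) / 2) * F₂ t) r +
            (1 + 2 * (ν : ℂ) / (r : ℂ)) *
              ((((κ : ℂ) + β) / 2) * F₁ r + ((ν : ℂ) / 2) * F₂ r) = 0)) := by
  set g : ℝ → ℂ := fun t => (((κ : ℂ) + β) / 2) * F₁ t + ((ν : ℂ) / 2) * F₂ t with hg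
  have hr0 : ∀ r : ℝ, 0 < r → (r : ℂ) ≠ 0 := fun r hr => by
    exact_mod_cast hr.ne'
  have hgd : ∀ s : ℝ, 0 < s →
      HasDerivAt g ((((κ : ℂ) + β) / 2) * deriv F₁ s + ((ν : ℂ) / 2) * deriv F₂ s) s := by
    intro s hs
    exact ((hF₁ s hs).hasDerivAt.const_mul _).add ((hF₂ s hs).hasDerivAt.const_mul _)
  have hκ' : (κ : ℂ) ≠ 0 := by exact_mod_cast hκ
  have hκβ : (κ : ℂ) + β ≠ 0 := fun h => hβκ (eq_neg_of_add_eq_zero_right h)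
  constructor
  · intro h
    have h1 : ∀ s : ℝ, 0 < s →
        deriv g s = (((κ : ℂ) + β) / 2) * F₂ s - ((ν : ℂ) / 2) * F₁ s := by
      intro s hs
      obtain ⟨e1, e2⟩ := h s hs
      rw [(hgd s hs).deriv]
      linear_combination (((κ : ℂ) + β) / 2) * e2 - ((ν : ℂ) / 2) * e1
        - F₁ s / (2 * (s : ℂ)) * hβ
    have hev : ∀ r : ℝ, 0 < r →
        deriv g =ᶠ[𝓝 r] fun t => (((κ : ℂ) + β) / 2) * F₂ t - ((ν : ℂ) / 2) * F₁ t := by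
      intro r hr
      filter_upwards [Ioi_mem_nhds hr] with s hs
      exact h1 s hs
    have hd2 : ∀ r : ℝ, 0 < r →
        deriv (deriv g) r = (((κ : ℂ) + β) / 2) * deriv F₂ r - ((ν : ℂ) / 2) * deriv F₁ r := by
      intro r hr
      rw [(hev r hr).deriv_eq]
      exact (((hF₂ r hr).hasDerivAt.const_mul _).sub ((hF₁ r hr).hasDerivAt.const_mul _)).deriv
    refine ⟨fun r hr => by linear_combination h1 r hr, ?_, ?_⟩
    · intro r hr
      refine ((hev r hr).differentiableAt_iff).mpr ?_
      exact ((hF₂ r hr).const_mul _).sub ((hF₁ r hr).const_mul _)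
    · intro r hr
      obtain ⟨e1, e2⟩ := h r hr
      linear_combination hd2 r hr + (2 * β / (r : ℂ)) * h1 r hr
        - (((κ : ℂ) + β) / 2) * e1 - ((ν : ℂ) / 2) * e2 + F₂ r / (2 * (r : ℂ)) * hβ
  · rintro ⟨h1, h2, h3⟩ r hr
    have hA : deriv g r = (((κ : ℂ) + β) / 2) * deriv F₁ r + ((ν : ℂ) / 2) * deriv F₂ r :=
      (hgd r hr).deriv
    have hA2 := h1 r hr
    have hev : deriv g =ᶠ[𝓝 r] fun t => (((κ : ℂ) + β) / 2) * F₂ t - ((ν : ℂ) / 2) * F₁ t := by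
      filter_upwards [Ioi_mem_nhds hr] with s hs
      linear_combination h1 s hs
    have hB : deriv (deriv g) r
        = (((κ : ℂ) + β) / 2) * deriv F₂ r - ((ν : ℂ) / 2) * deriv F₁ r := by
      rw [hev.deriv_eq]
      exact (((hF₂ r hr).hasDerivAt.const_mul _).sub ((hF₁ r hr).hasDerivAt.const_mul _)).deriv
    have hC := h3 r hr
    have hD : ((κ : ℂ) * ((κ : ℂ) + β) / 2) ≠ 0 := by
      exact div_ne_zero (mul_ne_zero hκ' hκβ) two_ne_zero
    constructor
    · have key : ((κ : ℂ) * ((κ : ℂ) + β) / 2) *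
          ((-((ν : ℂ) / (r : ℂ)) - 1) * F₁ r - deriv F₂ r
            - ((β + (κ : ℂ)) / (r : ℂ)) * F₂ r) = 0 := by
        linear_combination ((ν : ℂ) / 2) * hA
          + (-(ν : ℂ) / 2 + ((κ : ℂ) + β) * β / (r : ℂ)) * hA2
          + (((κ : ℂ) + β) / 2) * hB - (((κ : ℂ) + β) / 2) * hC
          + (F₁ r + deriv F₂ r + 2 * ((κ : ℂ) + β) * F₂ r / (r : ℂ)) / 4 * hβ
      exact (mul_eq_zero.mp key).resolve_left hD
    · have key : ((κ : ℂ) * ((κ : ℂ) + β) / 2) *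
          (deriv F₁ r + ((β - (κ : ℂ)) / (r : ℂ)) * F₁ r
            - ((ν : ℂ) / (r : ℂ) + 1) * F₂ r) = 0 := by
        linear_combination (-(((κ : ℂ) + β) / 2)) * hA
          + ((((κ : ℂ) + β) / 2) + (ν : ℂ) * β / (r : ℂ)) * hA2
          + ((ν : ℂ) / 2) * hB - ((ν : ℂ) / 2) * hC
          + (F₂ r - deriv F₁ r + 2 * (ν : ℂ) * F₂ r / (r : ℂ)
              + 2 * (κ : ℂ) * F₁ r / (r : ℂ)) / 4 * hβ
      exact (mul_eq_zero.mp key).resolve_left hD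
end

section
/- Let β ∈ (0, 1/2), ν ∈ ℝ, and ε ∈ {1, −1}. Then Im( i·2^{2β}·Γ(β + iν)·e^{εiπβ}·Γ(−2β) / (Γ(2β)·Γ(1 − β + iν)) ) = − 2^{2β−1}·|Γ(β + iν)|²·e^{επν} / (2β·Γ(2β)²), where Γ denotes the complex Gamma function. -/
/-!
Euler's reflection formula, applied at `-2β` and at `β - iν` (where `Γ` is the conjugate of
`Γ(β + iν)`), turns the quotient into the real number
`-2^{2β} |Γ(β + iν)|² / (2β sin(2πβ) Γ(2β)²)` times `i e^{επiβ} sin(π(β - iν))`.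
For `ε = ±1` the real part of `e^{επiβ} sin(π(β - iν))` is `½ sin(2πβ) e^{επν}`, and `sin(2πβ)`
cancels.
-/

open Complex Real ComplexConjugate

theorem Real.Gamma_neg_of_pos {x : ℝ} (hx : 0 < x) :
    Gamma (-x) = -π / (x * Real.sin (π * x) * Gamma x) := by
  have hrefl := Real.Gamma_mul_Gamma_one_sub (-x)
  rw [sub_neg_eq_add, add_comm, Real.Gamma_add_one hx.ne', mul_neg, Real.sin_neg] at hrefl
  rw [eq_div_of_mul_eq (mul_pos hx (Real.Gamma_pos_of_pos hx)).ne' hrefl]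
  field_simp

theorem Complex.inv_Gamma_one_sub {s : ℂ} (hs : Gamma s ≠ 0) :
    (Gamma (1 - s))⁻¹ = Gamma s * Complex.sin (π * s) / π := by
  have hrefl := congrArg (·⁻¹) (Complex.Gamma_mul_Gamma_one_sub s)
  simp only [mul_inv, inv_div] at hrefl
  rw [← mul_inv_cancel_left₀ hs (Gamma (1 - s))⁻¹, hrefl, mul_div_assoc]

theorem Complex.re_exp_mul_I_mul_sin_sub_mul_I {ε : ℝ} (hε : ε = 1 ∨ ε = -1) (a b : ℝ) :
    (Complex.exp (ε * a * I) * Complex.sin (a - b * I)).re =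
      Real.sin (2 * a) / 2 * Real.exp (ε * b) := by
  rw [← ofReal_mul, exp_mul_I, Complex.sin_sub, Complex.sin_mul_I, Complex.cos_mul_I,
    ← ofReal_cos, ← ofReal_sin, ← ofReal_sin, ← ofReal_cos, ← ofReal_sinh, ← ofReal_cosh]
  simp only [mul_re, add_re, sub_re, mul_im, add_im, sub_im, ofReal_re, ofReal_im, I_re, I_im]
  rw [Real.sin_two_mul]
  rcases hε with rfl | rfl
  · rw [one_mul, one_mul, ← Real.cosh_add_sinh]; ring
  · rw [neg_one_mul, neg_one_mul, Real.cos_neg, Real.sin_neg, ← Real.cosh_sub_sinh]; ring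

/-- For `β ∈ (0, 1/2)`, `ν ∈ ℝ` and `ε = ±1`,
`Im( i·2^{2β}·Γ(β+iν)·e^{εiπβ}·Γ(−2β) / (Γ(2β)·Γ(1−β+iν)) )
  = − 2^{2β−1}·|Γ(β+iν)|²·e^{επν} / (2β·Γ(2β)²)`. -/
theorem gamma_imaginary_part_identity (β ν ε : ℝ)
    (hβ : β ∈ Set.Ioo (0 : ℝ) (1 / 2)) (hε : ε = 1 ∨ ε = -1) :
    (I * (2 : ℂ) ^ (((2 * β : ℝ)) : ℂ) * Complex.Gamma ((β : ℂ) + I * (ν : ℂ)) *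
        Complex.exp ((ε : ℂ) * (π : ℂ) * (β : ℂ) * I) * Complex.Gamma (-((2 * β : ℝ) : ℂ)) /
        (Complex.Gamma (((2 * β : ℝ)) : ℂ) *
          Complex.Gamma (1 - (β : ℂ) + I * (ν : ℂ)))).im =
      -((2 : ℝ) ^ (2 * β - 1) * ‖Complex.Gamma ((β : ℂ) + I * (ν : ℂ))‖ ^ 2 *
          Real.exp (ε * π * ν)) /
        (2 * β * Real.Gamma (2 * β) ^ 2) := by
  obtain ⟨hβ0, hβ2⟩ := hβ
  set A := Complex.Gamma ((β : ℂ) + I * (ν : ℂ))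
  have hconj : Complex.Gamma (β - ν * I) = conj A := by
    rw [← Complex.Gamma_conj]; congr 1; simp [Complex.ext_iff]
  have hA : Complex.Gamma (β - ν * I) ≠ 0 :=
    Complex.Gamma_ne_zero_of_re_pos (by simpa using hβ0)
  have hsin : Real.sin (2 * β * π) ≠ 0 :=
    (Real.sin_pos_of_pos_of_lt_pi (by positivity) (by nlinarith [Real.pi_pos])).ne'
  have hΓ : Real.Gamma (2 * β) ≠ 0 := (Real.Gamma_pos_of_pos (by positivity)).ne'
  have hsplit : I * (2 : ℂ) ^ (((2 * β : ℝ)) : ℂ) * A *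
        Complex.exp ((ε : ℂ) * (π : ℂ) * (β : ℂ) * I) * Complex.Gamma (-((2 * β : ℝ) : ℂ)) /
        (Complex.Gamma (((2 * β : ℝ)) : ℂ) * Complex.Gamma (1 - (β : ℂ) + I * (ν : ℂ))) =
      ((-((2 : ℝ) ^ (2 * β) * ‖A‖ ^ 2) /
          (2 * β * Real.sin (π * (2 * β)) * Real.Gamma (2 * β) ^ 2) : ℝ) : ℂ) *
        (I * (Complex.exp (ε * (π * β : ℝ) * I) *
          Complex.sin ((π * β : ℝ) - (π * ν : ℝ) * I))) := by
    have hone_sub : 1 - (β : ℂ) + I * ν = 1 - (β - ν * I) := by ring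
    rw [div_eq_mul_inv, mul_inv, hone_sub, Complex.inv_Gamma_one_sub hA, hconj, ← ofReal_neg,
      Complex.Gamma_ofReal, Complex.Gamma_ofReal, Real.Gamma_neg_of_pos (by positivity)]
    push_cast [← Complex.mul_conj', ofReal_cpow zero_le_two]
    field_simp
  rw [hsplit, im_ofReal_mul, I_mul_im, Complex.re_exp_mul_I_mul_sin_sub_mul_I hε,
    Real.rpow_sub two_pos, Real.rpow_one, show 2 * (π * β) = π * (2 * β) by ring]
  field_simp
end

section
/- Let ν ∈ ℝ with ν ≠ 0. Then Im( Γ′(1 + iν)/Γ(1 + iν) + i/(2ν) ) = (π/2)·coth(πν), where Γ′ denotes the complex derivative of the complex Gamma function Γ. -/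
/-!
Write `ψ = Γ'/Γ` and `s = 1 + iν`. Taking logarithmic derivatives in the reflection formula
`Γ(s)Γ(1 - s) = π / sin(πs)` gives `ψ(s) - ψ(-iν) = -π cot(πs) = iπ coth(πν)`, while the
recurrence `ψ(z + 1) = ψ(z) + 1/z` and `Γ(conj z) = conj Γ(z)` give
`ψ(-iν) = ψ(1 - iν) - i/ν = conj ψ(s) - i/ν`. Hence `2i Im ψ(s) = iπ coth(πν) - i/ν`.
-/

open Complex Real ComplexConjugate

namespace Complex

theorem digamma_conj (s : ℂ) : digamma (conj s) = conj (digamma s) := by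
  have hGamma : Gamma = conj ∘ Gamma ∘ conj := funext fun z ↦ by simp [Gamma_conj]
  have hderiv : deriv Gamma (conj s) = conj (deriv Gamma s) := by
    conv_lhs => rw [hGamma, deriv_conj_conj]
    simp
  rw [digamma_def, logDeriv_apply, logDeriv_apply, hderiv, Gamma_conj, map_div₀]

theorem digamma_sub_digamma_one_sub {s : ℂ} (hs : ∀ n : ℤ, s ≠ n) :
    digamma s - digamma (1 - s) = -π * cot (π * s) := by
  have hΓ (z : ℂ) (hz : ∀ n : ℤ, z ≠ n) (m : ℕ) : z ≠ -m := by exact_mod_cast hz (-m)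
  have hs' (n : ℤ) : 1 - s ≠ n := fun h ↦ hs (1 - n) (by push_cast; linear_combination -h)
  have hsin : sin (π * s) ≠ 0 := by
    rw [Ne, sin_eq_zero_iff]
    rintro ⟨k, hk⟩
    exact hs k (mul_left_cancel₀ (ofReal_ne_zero.mpr pi_ne_zero) (by rw [hk]; ring))
  have hdiff1 : DifferentiableAt ℂ (fun z ↦ 1 - z) s := by fun_prop
  have hdiffsin : DifferentiableAt ℂ (fun z : ℂ ↦ (π : ℂ) * z) s := by fun_prop
  have hlhs : logDeriv (fun z ↦ Gamma z * Gamma (1 - z)) s = digamma s - digamma (1 - s) := by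
    rw [logDeriv_mul (f := Gamma) (g := fun z ↦ Gamma (1 - z)) s
      (Gamma_ne_zero (hΓ s hs)) (Gamma_ne_zero (hΓ (1 - s) hs'))
      (differentiableAt_Gamma _ (hΓ s hs))
      ((differentiableAt_Gamma _ (hΓ (1 - s) hs')).comp s hdiff1)]
    rw [show (fun z ↦ Gamma (1 - z)) = Gamma ∘ (fun z ↦ 1 - z) from rfl,
      logDeriv_comp (differentiableAt_Gamma _ (hΓ (1 - s) hs')) hdiff1]
    simp [digamma_def, sub_eq_add_neg]
  have hrhs : logDeriv (fun z : ℂ ↦ π / sin (π * z)) s = -π * cot (π * s) := by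
    rw [logDeriv_div s (ofReal_ne_zero.mpr pi_ne_zero) hsin (by fun_prop) (by fun_prop),
      show (fun z : ℂ ↦ sin (π * z)) = sin ∘ (fun z ↦ (π : ℂ) * z) from rfl,
      logDeriv_comp differentiableAt_sin hdiffsin, logDeriv_sin, logDeriv_const]
    simp [mul_comm]
  rw [← hlhs, ← hrhs]
  exact congrArg (logDeriv · s) (funext Gamma_mul_Gamma_one_sub)

theorem cot_pi_mul_one_add_I_mul (x : ℝ) :
    cot (π * (1 + I * x)) = -I * (Real.cosh (π * x) / Real.sinh (π * x)) := by
  have : (π : ℂ) * (1 + I * x) = ((π * x : ℝ) : ℂ) * I + π := by push_cast; ring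
  rw [this, cot_eq_cos_div_sin, cos_add_pi, sin_add_pi, neg_div_neg_eq, cos_mul_I, sin_mul_I,
    ← ofReal_cosh, ← ofReal_sinh]
  push_cast
  field_simp
  rw [I_sq]
  ring

theorem im_digamma_one_add_I_mul {ν : ℝ} (hν : ν ≠ 0) :
    (digamma (1 + I * ν)).im =
      π / 2 * (Real.cosh (π * ν) / Real.sinh (π * ν)) - 1 / (2 * ν) := by
  set s : ℂ := 1 + I * ν
  have hs (n : ℤ) : s ≠ n := fun h ↦ hν (by simpa [s] using congrArg im h)
  have hs' (m : ℕ) : -(I * ν) ≠ -m := fun h ↦ hν (by simpa using congrArg im h)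
  have hrefl := digamma_sub_digamma_one_sub hs
  have hrec := digamma_apply_add_one _ hs'
  have hconj := digamma_conj s
  rw [show 1 - s = -(I * ν) by ring, cot_pi_mul_one_add_I_mul ν] at hrefl
  rw [show conj s = -(I * ν) + 1 by simp [s]; ring, hrec] at hconj
  have hdiff : digamma s - conj (digamma s) =
      ((π * (Real.cosh (π * ν) / Real.sinh (π * ν)) - 1 / ν : ℝ) : ℂ) * I := by
    have hinv : (-(I * ν))⁻¹ = I / ν := by
      field_simp
      rw [I_sq]
      ring
    rw [← hconj, hinv]
    push_cast at hrefl ⊢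
    linear_combination hrefl
  rw [sub_conj] at hdiff
  have him : 2 * (digamma s).im = π * (Real.cosh (π * ν) / Real.sinh (π * ν)) - 1 / ν := by
    exact_mod_cast mul_right_cancel₀ I_ne_zero hdiff
  linear_combination him / 2

end Complex

/-- For real `ν ≠ 0`, `Im( Γ′(1 + iν)/Γ(1 + iν) + i/(2ν) ) = (π/2)·coth(πν)`,
where `coth x = cosh x / sinh x` and `Γ′` is the complex derivative of the complex
Gamma function. -/
theorem digamma_imaginary_part (ν : ℝ) (hν : ν ≠ 0) :
    (deriv Complex.Gamma (1 + I * (ν : ℂ)) / Complex.Gamma (1 + I * (ν : ℂ)) +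
        I / (2 * (ν : ℂ))).im =
      π / 2 * (Real.cosh (π * ν) / Real.sinh (π * ν)) := by
  rw [← logDeriv_apply, ← digamma_def, add_im, im_digamma_one_add_I_mul hν]
  have hI : (I / (2 * (ν : ℂ))).im = 1 / (2 * ν) := by
    rw [← ofReal_ofNat, ← ofReal_mul, div_ofReal_im, I_im]
  rw [hI]
  ring
end

section
/- Let β ∈ (0, 1/2), ν ∈ ℝ, and ε ∈ {1, −1}. Define c := i·2^{2β−1}·|Γ(β + iν)|²·e^{επν}·e^{(1−ε)iπβ}/(β·Γ(2β)²) + i·2^{2β}·Γ(β + iν)·e^{iπβ}·Γ(−2β)/(Γ(2β)·Γ(1 − β + iν)). Then Im( e^{(ε−1)iπβ}·c ) = 2^{2β−2}·|Γ(β + iν)|²·e^{επν}/(β·Γ(2β)²); in particular Im( e^{(ε−1)iπβ}·c ) ≠ 0. -/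
open Complex Real

/-!
After multiplication by `e^{(ε-1)iπβ}` the first summand of `c` is `i` times a positive real.
In the second, the reflection formula at `β - iν` turns `Γ(β+iν)/Γ(1-β+iν)` into
`|Γ(β+iν)|² sin(π(β-iν))/π`, and at `2β` (with `Γ(1-2β) = -2β Γ(-2β)`) it turns `Γ(-2β)` into
`-π/(2β sin(2πβ) Γ(2β))`. Since `Re(e^{iεπβ} sin(π(β-iν))) = ½ sin(2πβ) e^{επν}` for `ε = ±1`,
the imaginary part of the second summand is exactly `-½` times that of the first.
-/

/-- The connection coefficient `c^{ν,κ}_{+,ε}` for `0 < β < 1/2`: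
`c = i·2^{2β−1}·|Γ(β+iν)|²·e^{επν}·e^{(1−ε)iπβ}/(β·Γ(2β)²)
   + i·2^{2β}·Γ(β+iν)·e^{iπβ}·Γ(−2β)/(Γ(2β)·Γ(1−β+iν))`. -/
noncomputable def cPlus (β ν ε : ℝ) : ℂ :=
  I * (2 : ℂ) ^ (((2 * β - 1 : ℝ)) : ℂ) *
      ((‖Complex.Gamma ((β : ℂ) + I * (ν : ℂ))‖ : ℂ)) ^ 2 *
      (Real.exp (ε * π * ν) : ℂ) * Complex.exp ((1 - (ε : ℂ)) * I * (π : ℂ) * (β : ℂ)) /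
      ((β : ℂ) * Complex.Gamma (((2 * β : ℝ)) : ℂ) ^ 2) +
    I * (2 : ℂ) ^ (((2 * β : ℝ)) : ℂ) * Complex.Gamma ((β : ℂ) + I * (ν : ℂ)) *
      Complex.exp (I * (π : ℂ) * (β : ℂ)) * Complex.Gamma (-((2 * β : ℝ) : ℂ)) /
      (Complex.Gamma (((2 * β : ℝ)) : ℂ) * Complex.Gamma (1 - (β : ℂ) + I * (ν : ℂ)))

open ComplexConjugate

namespace Complex

theorem Gamma_div_Gamma_one_sub_conj (w : ℂ) :
    Gamma w / Gamma (1 - conj w) = ‖Gamma w‖ ^ 2 * sin (π * conj w) / π := by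
  have h := Gamma_mul_Gamma_one_sub (conj w)
  rw [Gamma_conj] at h
  rw [← ofReal_pow, Complex.sq_norm, ← mul_conj]
  rcases eq_or_ne (sin (π * conj w)) 0 with hs | hs
  · rw [hs, div_zero, mul_eq_zero, map_eq_zero] at h
    rcases h with h | h <;> simp [h, hs]
  · have h0 : Gamma (1 - conj w) ≠ 0 := right_ne_zero_of_mul (h ▸ div_ne_zero (by simp) hs)
    rw [eq_div_iff hs] at h
    rw [div_eq_div_iff h0 (by simp)]
    linear_combination (-Gamma w) * h

theorem Gamma_mul_Gamma_neg {s : ℂ} (hs : s ≠ 0) :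
    Gamma s * Gamma (-s) = -π / (s * sin (π * s)) := by
  have h := Gamma_mul_Gamma_one_sub s
  rw [sub_eq_neg_add, Gamma_add_one _ (neg_ne_zero.mpr hs)] at h
  rw [mul_comm s, ← div_div, neg_div, ← h]
  field_simp

theorem re_exp_mul_sin_sub_mul_I (x y ε : ℝ) (hε : ε = 1 ∨ ε = -1) :
    (exp (ε * x * I) * sin (x - y * I)).re = Real.sin (2 * x) * (Real.exp (ε * y) / 2) := by
  rw [sin_sub, sin_mul_I, cos_mul_I, ← ofReal_mul, exp_mul_I, ← ofReal_cos, ← ofReal_sin,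
    ← ofReal_sin, ← ofReal_cos, ← ofReal_sinh, ← ofReal_cosh]
  simp only [mul_re, add_re, sub_re, ofReal_re, ofReal_im, I_re, I_im, mul_im, add_im, sub_im]
  rcases hε with rfl | rfl <;>
    simp only [one_mul, neg_one_mul, Real.cos_neg, Real.sin_neg, Real.sin_two_mul, Real.cosh_eq,
      Real.sinh_eq] <;>
    ring

end Complex

theorem cPlus_eq {β : ℝ} (hβ : 0 < β) (ν ε : ℝ) :
    cPlus β ν ε = I * ((2 : ℝ) ^ (2 * β - 1) : ℝ) / (β * Complex.Gamma (2 * β) ^ 2) *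
      (‖Complex.Gamma (β + I * ν)‖ ^ 2 * Real.exp (ε * π * ν) * exp ((1 - ε) * I * π * β) +
        2 * β * exp (I * π * β) *
          (Complex.Gamma (β + I * ν) / Complex.Gamma (1 - conj (β + I * ν))) *
          (Complex.Gamma (2 * β) * Complex.Gamma (-(2 * β)))) := by
  have hβ' : (β : ℂ) ≠ 0 := ofReal_ne_zero.mpr hβ.ne'
  have hG : Complex.Gamma (2 * β) ≠ 0 := Gamma_ne_zero_of_re_pos (by simp [hβ])
  have hpow : (2 : ℂ) ^ (((2 * β : ℝ)) : ℂ) = 2 * ((2 : ℝ) ^ (2 * β - 1) : ℝ) := by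
    rw [Real.rpow_sub_one two_ne_zero, ← ofReal_ofNat, ← ofReal_cpow zero_le_two]
    push_cast
    ring
  have hconj : 1 - conj (β + I * ν : ℂ) = 1 - β + I * ν := by
    simp only [map_add, map_mul, conj_ofReal, conj_I]; ring
  rw [cPlus, hpow, ← ofReal_ofNat, ← ofReal_cpow zero_le_two, hconj]
  push_cast
  field_simp

theorem exp_mul_cPlus {β : ℝ} (hβ : 0 < β) (ν ε : ℝ) :
    exp ((ε - 1) * I * π * β) * cPlus β ν ε =
      I * ((2 : ℝ) ^ (2 * β - 1) * ‖Complex.Gamma (β + I * ν)‖ ^ 2 /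
          (β * Real.Gamma (2 * β) ^ 2) : ℝ) *
        (Real.exp (ε * π * ν) -
          exp (ε * (π * β : ℝ) * I) * sin ((π * β : ℝ) - (π * ν : ℝ) * I) /
            Real.sin (2 * (π * β))) := by
  have hβ' : (β : ℂ) ≠ 0 := ofReal_ne_zero.mpr hβ.ne'
  have hconj : conj (β + I * ν : ℂ) = β - I * ν := by simp [sub_eq_add_neg]
  have hexp₁ : exp ((1 - ε) * I * π * β) = (exp ((ε - 1) * I * π * β))⁻¹ := by
    rw [← Complex.exp_neg]; congr 1; ring
  have hexp₂ : exp (I * π * β) = exp (ε * (π * β : ℝ) * I) * (exp ((ε - 1) * I * π * β))⁻¹ := by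
    rw [← Complex.exp_neg, ← Complex.exp_add]; push_cast; congr 1; ring
  rw [cPlus_eq hβ, Gamma_div_Gamma_one_sub_conj, Gamma_mul_Gamma_neg (by simpa using hβ'), hconj,
    hexp₁, hexp₂, ← ofReal_ofNat, ← ofReal_mul, Gamma_ofReal]
  push_cast
  field_simp
  ring

theorem im_exp_mul_cPlus {β : ℝ} (hβ : β ∈ Set.Ioo (0 : ℝ) (1 / 2)) (ν : ℝ) {ε : ℝ}
    (hε : ε = 1 ∨ ε = -1) :
    (exp ((ε - 1) * I * π * β) * cPlus β ν ε).im =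
      (2 : ℝ) ^ (2 * β - 2) * ‖Complex.Gamma (β + I * ν)‖ ^ 2 * Real.exp (ε * π * ν) /
        (β * Real.Gamma (2 * β) ^ 2) := by
  obtain ⟨hβ₀, hβ₁⟩ := hβ
  have hsin : 0 < Real.sin (2 * (π * β)) :=
    Real.sin_pos_of_pos_of_lt_pi (by positivity) (by nlinarith [pi_pos])
  rw [exp_mul_cPlus hβ₀, mul_assoc, I_mul_im, re_ofReal_mul, sub_re, ofReal_re, div_ofReal_re,
    re_exp_mul_sin_sub_mul_I _ _ _ hε, mul_div_cancel_left₀ _ hsin.ne', ← mul_assoc ε π ν,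
    show 2 * β - 1 = 2 * β - 2 + 1 by ring, Real.rpow_add_one two_ne_zero]
  ring

/-- For `β ∈ (0, 1/2)`, `ν ∈ ℝ`, `ε = ±1`:
`Im( e^{(ε−1)iπβ}·c ) = 2^{2β−2}·|Γ(β+iν)|²·e^{επν}/(β·Γ(2β)²)`, and in particular this
imaginary part is nonzero. -/
theorem cPlus_imaginary_part (β ν ε : ℝ)
    (hβ : β ∈ Set.Ioo (0 : ℝ) (1 / 2)) (hε : ε = 1 ∨ ε = -1) :
    (Complex.exp (((ε : ℂ) - 1) * I * (π : ℂ) * (β : ℂ)) * cPlus β ν ε).im =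
        (2 : ℝ) ^ (2 * β - 2) * ‖Complex.Gamma ((β : ℂ) + I * (ν : ℂ))‖ ^ 2 *
          Real.exp (ε * π * ν) / (β * Real.Gamma (2 * β) ^ 2) ∧
      (Complex.exp (((ε : ℂ) - 1) * I * (π : ℂ) * (β : ℂ)) * cPlus β ν ε).im ≠ 0 := by
  rw [im_exp_mul_cPlus hβ ν hε]
  refine ⟨rfl, ne_of_gt ?_⟩
  obtain ⟨hβ₀, -⟩ := hβ
  have hΓ : 0 < ‖Complex.Gamma (β + I * ν)‖ :=
    norm_pos_iff.mpr (Gamma_ne_zero_of_re_pos (by simp [hβ₀]))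
  positivity
end

section
/- Let s > 0 and ν, κ ∈ ℝ with κ ≠ 0 and κ² = ν² − s², and set β := i·s. Then | i·κ·(κ − β)·2^{2β}·Γ(β + iν)·Γ(−2β)·e^{iπβ} / (ν·Γ(2β)·Γ(1 − β + iν)) |² = e^{−2πs}·sinh(π(ν − s))/sinh(π(ν + s)). -/
/-!
On the imaginary axis the reflection formula `Γ(z) Γ(1 - z) = π / sin(π z)` together with
`Γ(conj z) = conj Γ(z)` gives `|Γ(i t)|² = π / (t sinh(π t))` and `|Γ(1 + i t)|² = π t / sinh(π t)`.
In the modulus of `c₋` the factors `Γ(−2β)` and `Γ(2β)` are conjugate and cancel, `|2^{2β}| = 1`,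
`|e^{iπβ}| = e^{−πs}` and `|κ − β|² = ν²`; the remaining Gamma factors are `Γ(i(ν + s))` and
`Γ(1 + i(ν − s))`, and `κ² = (ν + s)(ν − s)` turns the quotient into the stated ratio of sinh's.
-/

open Complex Real

open ComplexConjugate

theorem Real.sinh_pi_mul_ne_zero {t : ℝ} (ht : t ≠ 0) : Real.sinh (π * t) ≠ 0 :=
  Real.sinh_ne_zero.2 (mul_ne_zero pi_ne_zero ht)

namespace Complex

theorem norm_Gamma_conj (z : ℂ) : ‖Gamma (conj z)‖ = ‖Gamma z‖ := by
  rw [Gamma_conj, norm_conj]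

theorem sq_norm_Gamma_one_add_I_mul {t : ℝ} (ht : t ≠ 0) :
    ‖Gamma (1 + I * t)‖ ^ 2 = π * t / Real.sinh (π * t) := by
  have hit : I * t ≠ 0 := mul_ne_zero I_ne_zero (ofReal_ne_zero.2 ht)
  have hsinh : (Real.sinh (π * t) : ℂ) ≠ 0 := ofReal_ne_zero.2 (Real.sinh_pi_mul_ne_zero ht)
  apply ofReal_injective
  calc ((‖Gamma (1 + I * t)‖ ^ 2 : ℝ) : ℂ) = Gamma (1 + I * t) * Gamma (1 - I * t) := by
        rw [ofReal_pow, ← mul_conj', ← Gamma_conj]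
        simp [sub_eq_add_neg]
    _ = I * t * (Gamma (I * t) * Gamma (1 - I * t)) := by
        rw [add_comm, Gamma_add_one _ hit, mul_assoc]
    _ = I * t * (π / (Real.sinh (π * t) * I)) := by
        rw [Gamma_mul_Gamma_one_sub, show (π : ℂ) * (I * t) = (π * t : ℝ) * I by push_cast; ring,
          sin_mul_I, ofReal_sinh]
    _ = ((π * t / Real.sinh (π * t) : ℝ) : ℂ) := by
        push_cast at hsinh ⊢
        field_simp

theorem sq_norm_Gamma_I_mul {t : ℝ} (ht : t ≠ 0) :
    ‖Gamma (I * t)‖ ^ 2 = π / (t * Real.sinh (π * t)) := by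
  have h := sq_norm_Gamma_one_add_I_mul ht
  rw [add_comm, Gamma_add_one _ (mul_ne_zero I_ne_zero (ofReal_ne_zero.2 ht)), norm_mul,
    norm_mul, norm_I, norm_real, one_mul, mul_pow, Real.norm_eq_abs, sq_abs] at h
  have hsinh := Real.sinh_pi_mul_ne_zero ht
  field_simp at h ⊢
  linear_combination h

theorem Gamma_I_mul_ne_zero {t : ℝ} (ht : t ≠ 0) : Gamma (I * t) ≠ 0 := by
  rw [← norm_ne_zero_iff, ← pow_ne_zero_iff two_ne_zero, sq_norm_Gamma_I_mul ht]
  exact div_ne_zero pi_ne_zero (mul_ne_zero ht (Real.sinh_pi_mul_ne_zero ht))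

end Complex

/-- For `s > 0`, `κ ≠ 0` with `κ² = ν² − s²` and `β := i·s`, the connection coefficient
`c^{ν,κ}_{−} = i·κ·(κ−β)·2^{2β}·Γ(β+iν)·Γ(−2β)·e^{iπβ}/(ν·Γ(2β)·Γ(1−β+iν))` (with
`2^{2β} := exp(2β·ln 2)`) satisfies
`|c^{ν,κ}_{−}|² = e^{−2πs}·sinh(π(ν−s))/sinh(π(ν+s))`. -/
theorem cMinus_abs_sq (s ν κ : ℝ) (hs : 0 < s) (hκ : κ ≠ 0) (h : κ ^ 2 = ν ^ 2 - s ^ 2) :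
    ‖(I * (κ : ℂ) * ((κ : ℂ) - I * (s : ℂ)) *
            Complex.exp (2 * (I * (s : ℂ)) * (Real.log 2 : ℂ)) *
            Complex.Gamma (I * (s : ℂ) + I * (ν : ℂ)) *
            Complex.Gamma (-(2 * (I * (s : ℂ)))) *
            Complex.exp (I * (π : ℂ) * (I * (s : ℂ))) /
          ((ν : ℂ) * Complex.Gamma (2 * (I * (s : ℂ))) *
            Complex.Gamma (1 - I * (s : ℂ) + I * (ν : ℂ))))‖ ^ 2 =
      Real.exp (-2 * π * s) * Real.sinh (π * (ν - s)) / Real.sinh (π * (ν + s)) := by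
  have hκ_sq : κ ^ 2 = (s + ν) * (ν - s) := by linear_combination h
  have hsum : s + ν ≠ 0 := left_ne_zero_of_mul (hκ_sq ▸ pow_ne_zero 2 hκ)
  have hdiff : ν - s ≠ 0 := right_ne_zero_of_mul (hκ_sq ▸ pow_ne_zero 2 hκ)
  have hν : ν ≠ 0 := by rintro rfl; nlinarith
  have hΓ2s : ‖Complex.Gamma (I * (2 * s : ℝ))‖ ≠ 0 :=
    norm_ne_zero_iff.2 (Gamma_I_mul_ne_zero (by positivity))
  have hnorm : ‖(κ : ℂ) - I * s‖ ^ 2 = ν ^ 2 := by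
    rw [Complex.sq_norm, show (κ : ℂ) - I * s = κ + (-s : ℝ) * I by push_cast; ring,
      normSq_add_mul_I]
    linear_combination h
  rw [show 2 * (I * (s : ℂ)) * (Real.log 2 : ℂ) = I * (2 * s * Real.log 2 : ℝ) by push_cast; ring,
    show I * (π : ℂ) * (I * s) = (-(π * s) : ℝ) by
      push_cast; linear_combination (π * s : ℂ) * I_sq,
    show I * (s : ℂ) + I * ν = I * (s + ν : ℝ) by push_cast; ring,
    show -(2 * (I * (s : ℂ))) = conj (I * (2 * s : ℝ)) by
      rw [map_mul, conj_I, conj_ofReal]; push_cast; ring,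
    show 2 * (I * (s : ℂ)) = I * (2 * s : ℝ) by push_cast; ring,
    show 1 - I * (s : ℂ) + I * ν = 1 + I * (ν - s : ℝ) by push_cast; ring]
  simp only [norm_div, norm_mul, norm_Gamma_conj, norm_I, norm_real, Real.norm_eq_abs,
    norm_exp_I_mul_ofReal, norm_exp_ofReal]
  have hexp : Real.exp (-(π * s)) ^ 2 = Real.exp (-2 * π * s) := by
    rw [← Real.exp_nat_mul]; ring_nf
  simp only [div_pow, mul_pow, one_pow, sq_abs, hnorm, hexp, sq_norm_Gamma_I_mul hsum,
    sq_norm_Gamma_one_add_I_mul hdiff, add_comm ν s]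
  have hsinh_sum := Real.sinh_pi_mul_ne_zero hsum
  have hsinh_diff := Real.sinh_pi_mul_ne_zero hdiff
  generalize ‖Complex.Gamma (I * (2 * s : ℝ))‖ = g at hΓ2s ⊢
  field_simp
  rw [hκ_sq]
end

section
/- Let ν ∈ ℝ with ν ≠ 0, let κ_ν be the smallest positive half-integer (element of ℕ + 1/2) with κ_ν² > ν² + 1/4, and define C^ν := 1 − (ν²·(κ_ν² + 1/4)/(κ_ν² − 1/4)²)·( √( 1 + (4κ_ν² − ν²)·(κ_ν² − 1/4)²/((κ_ν² + 1/4)²·ν²) ) − 1 ). Then C^ν > 0, and with b := 1 − C^ν, for every real κ with |κ| ≥ κ_ν and every s ∈ ℝ one has ν² + b/4 + κ²·b + s²·b − √( 4κ²ν² + 4ν²s² + κ²b² ) ≥ 0. -/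
/-!
Write `m = κν²`, `b = 1 - C^ν` and `t = κ² + s²`. Squaring, the inequality follows from
`(ν² + b/4 + b t)² ≥ (4ν² + b²) t`, i.e. from `channelGap ν t b ≥ 0`. As a function of `b` this
gap is a quadratic with nonnegative linear and leading coefficients, and `1 - C^ν` is exactly its
positive root at `t = m`, so the inequality is saturated at `κ = κν, s = 0`. Comparing with the
values of the gap at `b = 1` and at `b = ν²/(m - 1/4)` places the root strictly between them; the
lower bound `ν² < b (m - 1/4)` makes `t ↦ channelGap ν t b / t` nondecreasing for `t ≥ m`.
-/

/-- The constant `C^ν` of Lemma on higher angular momentum channels. -/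
noncomputable def Cnu (ν κν : ℝ) : ℝ :=
  1 - ν ^ 2 * (κν ^ 2 + 1 / 4) / (κν ^ 2 - 1 / 4) ^ 2 *
    (Real.sqrt (1 + (4 * κν ^ 2 - ν ^ 2) * (κν ^ 2 - 1 / 4) ^ 2 /
        ((κν ^ 2 + 1 / 4) ^ 2 * ν ^ 2)) - 1)

open Set

noncomputable def channelGap (ν t b : ℝ) : ℝ :=
  (ν ^ 2 + b / 4 + b * t) ^ 2 - (4 * ν ^ 2 + b ^ 2) * t

theorem channelGap_eq_quadratic (ν t b : ℝ) :
    channelGap ν t b =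
      (t - 1 / 4) ^ 2 * (b * b) + 2 * ν ^ 2 * (t + 1 / 4) * b + ν ^ 2 * (ν ^ 2 - 4 * t) := by
  unfold channelGap; ring

theorem channelGap_one (ν t : ℝ) : channelGap ν t 1 = (t - 1 / 4 - ν ^ 2) ^ 2 := by
  unfold channelGap; ring

theorem channelGap_div {ν t : ℝ} (ht : t - 1 / 4 ≠ 0) :
    channelGap ν t (ν ^ 2 / (t - 1 / 4)) =
      4 * t * ν ^ 2 * (ν ^ 2 - (t - 1 / 4)) / (t - 1 / 4) := by
  obtain ⟨d, rfl⟩ : ∃ d, t = d + 1 / 4 := ⟨t - 1 / 4, by ring⟩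
  rw [add_sub_cancel_right] at ht ⊢
  rw [channelGap_eq_quadratic, add_sub_cancel_right]
  field_simp
  ring

theorem channelGap_strictMonoOn (ν : ℝ) {t : ℝ} (ht : 1 / 4 < t) :
    StrictMonoOn (channelGap ν t) (Ici 0) := by
  intro x hx y _ hxy
  have hx : 0 ≤ x := hx
  have hsq : (t - 1 / 4) ^ 2 * (x * x) < (t - 1 / 4) ^ 2 * (y * y) := by gcongr
  have hlin : 2 * ν ^ 2 * (t + 1 / 4) * x ≤ 2 * ν ^ 2 * (t + 1 / 4) * y := by gcongr
  rw [channelGap_eq_quadratic, channelGap_eq_quadratic]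
  linarith

/-- The quadratic formula for the root of `channelGap ν t`. -/
theorem channelGap_root_eq_zero {ν t u : ℝ} (ht : t - 1 / 4 ≠ 0)
    (hu : ν ^ 2 * (t + 1 / 4) ^ 2 * u ^ 2 =
      ν ^ 2 * (t + 1 / 4) ^ 2 + (4 * t - ν ^ 2) * (t - 1 / 4) ^ 2) :
    channelGap ν t (ν ^ 2 * (t + 1 / 4) / (t - 1 / 4) ^ 2 * (u - 1)) = 0 := by
  have hdisc : discrim ((t - 1 / 4) ^ 2) (2 * ν ^ 2 * (t + 1 / 4)) (ν ^ 2 * (ν ^ 2 - 4 * t))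
      = (2 * ν ^ 2 * (t + 1 / 4) * u) * (2 * ν ^ 2 * (t + 1 / 4) * u) := by
    rw [discrim]; linear_combination (-4 * ν ^ 2) * hu
  rw [channelGap_eq_quadratic, quadratic_eq_zero_iff (pow_ne_zero 2 ht) hdisc]
  left
  have ha := pow_ne_zero 2 ht
  generalize (t - 1 / 4) ^ 2 = a at ha ⊢
  field_simp
  ring

section Root

variable {ν m b : ℝ}

theorem lt_one_of_channelGap_eq_zero (hm : ν ^ 2 + 1 / 4 < m) (hb : 0 ≤ b)
    (h : channelGap ν m b = 0) : b < 1 := by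
  have hd : 0 < m - 1 / 4 - ν ^ 2 := by linarith
  have hmono := channelGap_strictMonoOn ν (t := m) (by linarith [sq_nonneg ν])
  refine (hmono.lt_iff_lt hb (mem_Ici.2 zero_le_one)).1 ?_
  rw [h, channelGap_one]
  positivity

theorem lt_mul_of_channelGap_eq_zero (hν : ν ≠ 0) (hm : ν ^ 2 + 1 / 4 < m) (hb : 0 ≤ b)
    (h : channelGap ν m b = 0) : ν ^ 2 < b * (m - 1 / 4) := by
  have hd : 0 < m - 1 / 4 := by linarith [sq_nonneg ν]
  rw [← div_lt_iff₀ hd]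
  have hmono := channelGap_strictMonoOn ν (t := m) (by linarith [sq_nonneg ν])
  refine (hmono.lt_iff_lt (mem_Ici.2 (by positivity)) hb).1 ?_
  rw [h, channelGap_div hd.ne']
  have hm0 : 0 < m := by linarith
  exact div_neg_of_neg_of_pos (mul_neg_of_pos_of_neg (by positivity) (by linarith)) hd

end Root

theorem channelGap_nonneg_of_le {ν m t b : ℝ} (hb : 0 ≤ b) (hP : ν ^ 2 + b / 4 ≤ b * m)
    (hm : 0 < m) (hmt : m ≤ t) (h : 0 ≤ channelGap ν m b) : 0 ≤ channelGap ν t b := by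
  set P := ν ^ 2 + b / 4
  have hP0 : 0 ≤ P := by positivity
  have hPt : P ≤ b * t := hP.trans (by gcongr)
  have hPP : P * P ≤ (b * m) * (b * t) := mul_le_mul hP hPt hP0 (by positivity)
  have key : m * channelGap ν t b
      = (t - m) * ((b * m) * (b * t) - P * P) + t * channelGap ν m b := by
    unfold channelGap; ring
  have : 0 ≤ m * channelGap ν t b := by
    rw [key]
    exact add_nonneg (mul_nonneg (sub_nonneg.2 hmt) (sub_nonneg.2 hPP))
      (mul_nonneg (hm.le.trans hmt) h)
  exact (mul_nonneg_iff_of_pos_left hm).1 this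

theorem sqrt_le_of_channelGap_nonneg {ν κ s b : ℝ} (hb : 0 ≤ b)
    (h : 0 ≤ channelGap ν (κ ^ 2 + s ^ 2) b) :
    √(4 * κ ^ 2 * ν ^ 2 + 4 * ν ^ 2 * s ^ 2 + κ ^ 2 * b ^ 2) ≤
      ν ^ 2 + b / 4 + κ ^ 2 * b + s ^ 2 * b := by
  rw [Real.sqrt_le_iff]
  refine ⟨by positivity, ?_⟩
  unfold channelGap at h
  nlinarith [sq_nonneg (b * s)]

section Cnu

variable {ν κν : ℝ}

theorem one_sub_Cnu_pos (hν : ν ≠ 0) (h : ν ^ 2 + 1 / 4 < κν ^ 2) : 0 < 1 - Cnu ν κν := by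
  have h4 : 0 < 4 * κν ^ 2 - ν ^ 2 := by nlinarith
  have hd : 0 < κν ^ 2 - 1 / 4 := by nlinarith
  rw [Cnu, sub_sub_cancel]
  refine mul_pos (by positivity) (sub_pos.2 ?_)
  rw [Real.lt_sqrt zero_le_one, one_pow, lt_add_iff_pos_right]
  positivity

theorem channelGap_one_sub_Cnu (hν : ν ≠ 0) (h : ν ^ 2 + 1 / 4 < κν ^ 2) :
    channelGap ν (κν ^ 2) (1 - Cnu ν κν) = 0 := by
  have h4 : 0 < 4 * κν ^ 2 - ν ^ 2 := by nlinarith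
  have hd : 0 < κν ^ 2 - 1 / 4 := by nlinarith
  rw [Cnu, sub_sub_cancel]
  refine channelGap_root_eq_zero hd.ne' ?_
  rw [Real.sq_sqrt (by positivity)]
  field_simp

end Cnu

theorem higher_channel_inequality_general (ν : ℝ) (hν : ν ≠ 0) (κν : ℝ)
    (hκν_half : ∃ n : ℕ, κν = n + 1 / 2)
    (hκν_gt : κν ^ 2 > ν ^ 2 + 1 / 4) :
    0 < Cnu ν κν ∧
      ∀ κ s : ℝ, |κ| ≥ κν →
        ν ^ 2 + (1 - Cnu ν κν) / 4 + κ ^ 2 * (1 - Cnu ν κν) + s ^ 2 * (1 - Cnu ν κν) -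
            Real.sqrt (4 * κ ^ 2 * ν ^ 2 + 4 * ν ^ 2 * s ^ 2 +
              κ ^ 2 * (1 - Cnu ν κν) ^ 2) ≥ 0 := by
  have hκν_nonneg : 0 ≤ κν := by obtain ⟨n, rfl⟩ := hκν_half; positivity
  have hb := (one_sub_Cnu_pos hν hκν_gt).le
  have hroot := channelGap_one_sub_Cnu hν hκν_gt
  have hb_lt_one := lt_one_of_channelGap_eq_zero hκν_gt hb hroot
  have hP := lt_mul_of_channelGap_eq_zero hν hκν_gt hb hroot
  refine ⟨by linarith, fun κ s hκ => ?_⟩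
  have hκ_sq : κν ^ 2 ≤ κ ^ 2 + s ^ 2 := by
    nlinarith [sq_abs κ, pow_le_pow_left₀ hκν_nonneg hκ 2, sq_nonneg s]
  have hgap := channelGap_nonneg_of_le hb (by linarith) (by linarith [sq_nonneg ν]) hκ_sq hroot.ge
  linarith [sqrt_le_of_channelGap_nonneg hb hgap]

/-- Let `ν ≠ 0` and let `κν` be the smallest positive half-integer with `κν² > ν² + 1/4`.
Then `C^ν > 0`, and with `b := 1 − C^ν`, for every real `κ` with `|κ| ≥ κν` and every
`s ∈ ℝ` one has `ν² + b/4 + κ²b + s²b − √(4κ²ν² + 4ν²s² + κ²b²) ≥ 0`. -/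
theorem higher_channel_inequality (ν : ℝ) (hν : ν ≠ 0) (κν : ℝ)
    (hκν_half : ∃ n : ℕ, κν = n + 1 / 2)
    (hκν_gt : κν ^ 2 > ν ^ 2 + 1 / 4)
    (hκν_min : ∀ κ : ℝ, (∃ n : ℕ, κ = n + 1 / 2) → κ ^ 2 > ν ^ 2 + 1 / 4 → κν ≤ κ) :
    0 < Cnu ν κν ∧
      ∀ κ s : ℝ, |κ| ≥ κν →
        ν ^ 2 + (1 - Cnu ν κν) / 4 + κ ^ 2 * (1 - Cnu ν κν) + s ^ 2 * (1 - Cnu ν κν) -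
            Real.sqrt (4 * κ ^ 2 * ν ^ 2 + 4 * ν ^ 2 * s ^ 2 +
              κ ^ 2 * (1 - Cnu ν κν) ^ 2) ≥ 0 :=
  higher_channel_inequality_general ν hν κν hκν_half hκν_gt
end

section
/- Let ν, s ∈ ℝ, b > 0, and κ ≥ 0. Define a(κ) := ν² + b/4 + κ²·b + s²·b − √( 4κ²ν² + 4ν²s² + κ²b² ). Then a(κ + 1) − a(κ) ≥ (2κ + 1)·b − √(4ν² + b²). -/
/-- For `ν, s ∈ ℝ`, `b > 0`, `κ ≥ 0`, with
`a(κ) := ν² + b/4 + κ²b + s²b − √(4κ²ν² + 4ν²s² + κ²b²)`, one has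
`a(κ + 1) − a(κ) ≥ (2κ + 1)b − √(4ν² + b²)`. -/
theorem a_shift_lower_bound (ν s b κ : ℝ) (hb : 0 < b) (hκ : 0 ≤ κ) :
    (ν ^ 2 + b / 4 + (κ + 1) ^ 2 * b + s ^ 2 * b -
        Real.sqrt (4 * (κ + 1) ^ 2 * ν ^ 2 + 4 * ν ^ 2 * s ^ 2 + (κ + 1) ^ 2 * b ^ 2)) -
      (ν ^ 2 + b / 4 + κ ^ 2 * b + s ^ 2 * b -
        Real.sqrt (4 * κ ^ 2 * ν ^ 2 + 4 * ν ^ 2 * s ^ 2 + κ ^ 2 * b ^ 2)) ≥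
    (2 * κ + 1) * b - Real.sqrt (4 * ν ^ 2 + b ^ 2) := by
  set c : ℝ := 4 * ν ^ 2 + b ^ 2 with hc
  have hc0 : 0 ≤ c := by positivity
  set f : ℝ := 4 * κ ^ 2 * ν ^ 2 + 4 * ν ^ 2 * s ^ 2 + κ ^ 2 * b ^ 2 with hf
  have hf0 : 0 ≤ f := by positivity
  have hA2 : Real.sqrt f ^ 2 = f := Real.sq_sqrt hf0
  have hC2 : Real.sqrt c ^ 2 = c := Real.sq_sqrt hc0
  have hA0 : 0 ≤ Real.sqrt f := Real.sqrt_nonneg _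
  have hC0 : 0 ≤ Real.sqrt c := Real.sqrt_nonneg _
  -- κ√c ≤ √f
  have hkc : κ * Real.sqrt c ≤ Real.sqrt f := by
    rw [← Real.sqrt_sq (by positivity : 0 ≤ κ * Real.sqrt c)]
    apply Real.sqrt_le_sqrt
    nlinarith [sq_nonneg (ν * s)]
  have key : Real.sqrt (4 * (κ + 1) ^ 2 * ν ^ 2 + 4 * ν ^ 2 * s ^ 2 + (κ + 1) ^ 2 * b ^ 2)
      ≤ Real.sqrt f + Real.sqrt c := by
    rw [← Real.sqrt_sq (by positivity : 0 ≤ Real.sqrt f + Real.sqrt c)]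
    apply Real.sqrt_le_sqrt
    have : κ * c ≤ Real.sqrt f * Real.sqrt c := by
      calc κ * c = (κ * Real.sqrt c) * Real.sqrt c := by nlinarith
        _ ≤ Real.sqrt f * Real.sqrt c := by nlinarith
    nlinarith
  nlinarith [key]
end

section
/- Let ν ∈ ℝ with ν ≠ 0, let κ > 0, and let b ≥ √2·|ν|·( √(1 + κ^{−2}) − 1 )^{1/2}. Then the function s ↦ ν² + b/4 + κ²·b + s²·b − √( 4κ²ν² + 4ν²s² + κ²b² ) is nondecreasing on [0, ∞); in particular, for every s ≥ 0 its value is at least ν² + b/4 + κ²·b − κ·√(4ν² + b²). -/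
lemma sqrt_add_le_aux (x d e : ℝ) (he : 0 ≤ e)
    (h : x + d ≤ (Real.sqrt x + e) ^ 2) :
    Real.sqrt (x + d) ≤ Real.sqrt x + e := by
  calc Real.sqrt (x + d) ≤ Real.sqrt ((Real.sqrt x + e) ^ 2) := Real.sqrt_le_sqrt h
    _ = Real.sqrt x + e := Real.sqrt_sq (by positivity)

set_option maxHeartbeats 1000000 in
/-- Let `ν ≠ 0`, `κ > 0`, and `b ≥ √2·|ν|·(√(1 + κ^{−2}) − 1)^{1/2}`. Then
`s ↦ ν² + b/4 + κ²b + s²b − √(4κ²ν² + 4ν²s² + κ²b²)` is nondecreasing on `[0,∞)`;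
in particular, for every `s ≥ 0` its value is at least `ν² + b/4 + κ²b − κ·√(4ν² + b²)`. -/
theorem a_monotone_in_s (ν κ b : ℝ) (hν : ν ≠ 0) (hκ : 0 < κ)
    (hb : b ≥ Real.sqrt 2 * |ν| * Real.sqrt (Real.sqrt (1 + (κ ^ 2)⁻¹) - 1)) :
    MonotoneOn
        (fun s : ℝ => ν ^ 2 + b / 4 + κ ^ 2 * b + s ^ 2 * b -
          Real.sqrt (4 * κ ^ 2 * ν ^ 2 + 4 * ν ^ 2 * s ^ 2 + κ ^ 2 * b ^ 2))
        (Set.Ici 0) ∧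
      ∀ s : ℝ, 0 ≤ s →
        ν ^ 2 + b / 4 + κ ^ 2 * b + s ^ 2 * b -
            Real.sqrt (4 * κ ^ 2 * ν ^ 2 + 4 * ν ^ 2 * s ^ 2 + κ ^ 2 * b ^ 2) ≥
          ν ^ 2 + b / 4 + κ ^ 2 * b - κ * Real.sqrt (4 * ν ^ 2 + b ^ 2) := by
  have hb0 : 0 ≤ b := le_trans (by positivity) hb
  have hν2 : 0 < ν ^ 2 := by positivity
  have hS0 : 0 ≤ Real.sqrt (4 * ν ^ 2 + b ^ 2) := Real.sqrt_nonneg _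
  have hS2 : Real.sqrt (4 * ν ^ 2 + b ^ 2) ^ 2 = 4 * ν ^ 2 + b ^ 2 :=
    Real.sq_sqrt (by positivity)
  set S := Real.sqrt (4 * ν ^ 2 + b ^ 2) with hSdef
  clear_value S
  -- the key inequality : 2ν² ≤ bκS
  have hu2 : Real.sqrt (1 + (κ ^ 2)⁻¹) ^ 2 = 1 + (κ ^ 2)⁻¹ := Real.sq_sqrt (by positivity)
  have hu1 : 1 ≤ Real.sqrt (1 + (κ ^ 2)⁻¹) := by
    nlinarith [hu2, Real.sqrt_nonneg (1 + (κ ^ 2)⁻¹), inv_nonneg.2 (sq_nonneg κ)]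
  set u := Real.sqrt (1 + (κ ^ 2)⁻¹) with hudef
  clear_value u
  have hb2 : 2 * ν ^ 2 * (u - 1) ≤ b ^ 2 := by
    have h1 : (Real.sqrt 2 * |ν| * Real.sqrt (u - 1)) ^ 2 ≤ b ^ 2 :=
      pow_le_pow_left₀ (by positivity) hb 2
    have h2 : Real.sqrt 2 ^ 2 = 2 := Real.sq_sqrt (by norm_num)
    have h3 : Real.sqrt (u - 1) ^ 2 = u - 1 := Real.sq_sqrt (by linarith)
    have h4 : |ν| ^ 2 = ν ^ 2 := sq_abs ν
    rw [mul_pow, mul_pow, h2, h3, h4] at h1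
    linarith
  have hκ2 : κ ^ 2 * u ^ 2 = κ ^ 2 + 1 := by
    rw [hu2]; field_simp
  have hc0 : 0 ≤ 2 * ν ^ 2 * (u - 1) := by nlinarith
  have hb4 : (2 * ν ^ 2 * (u - 1)) ^ 2 ≤ (b ^ 2) ^ 2 := pow_le_pow_left₀ hc0 hb2 2
  have e1 : κ ^ 2 * (2 * ν ^ 2 * (u - 1)) ^ 2 + 4 * ν ^ 2 * κ ^ 2 * (2 * ν ^ 2 * (u - 1))
      = 4 * ν ^ 4 := by linear_combination 4 * ν ^ 4 * hκ2
  have key2 : 4 * ν ^ 4 ≤ κ ^ 2 * b ^ 2 * (4 * ν ^ 2 + b ^ 2) := by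
    nlinarith [e1, mul_le_mul_of_nonneg_left hb4 (sq_nonneg κ),
      mul_le_mul_of_nonneg_left hb2 (by positivity : (0:ℝ) ≤ 4 * ν ^ 2 * κ ^ 2)]
  have key : 2 * ν ^ 2 ≤ b * κ * S := by
    have h5 : 0 ≤ b * κ * S := by positivity
    have h6 : (2 * ν ^ 2) ^ 2 ≤ (b * κ * S) ^ 2 := by nlinarith [key2, hS2]
    exact le_of_pow_le_pow_left₀ two_ne_zero h5 h6
  -- monotonicity
  have mono : MonotoneOn
      (fun s : ℝ => ν ^ 2 + b / 4 + κ ^ 2 * b + s ^ 2 * b -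
        Real.sqrt (4 * κ ^ 2 * ν ^ 2 + 4 * ν ^ 2 * s ^ 2 + κ ^ 2 * b ^ 2))
      (Set.Ici 0) := by
    intro s₁ hs₁ s₂ hs₂ h12
    simp only [Set.mem_Ici] at hs₁ hs₂
    have hX1 : (0:ℝ) ≤ 4 * κ ^ 2 * ν ^ 2 + 4 * ν ^ 2 * s₁ ^ 2 + κ ^ 2 * b ^ 2 := by positivity
    have hD : 0 ≤ s₂ ^ 2 - s₁ ^ 2 := by nlinarith
    have hsq : Real.sqrt (4 * κ ^ 2 * ν ^ 2 + 4 * ν ^ 2 * s₁ ^ 2 + κ ^ 2 * b ^ 2) ^ 2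
        = 4 * κ ^ 2 * ν ^ 2 + 4 * ν ^ 2 * s₁ ^ 2 + κ ^ 2 * b ^ 2 := Real.sq_sqrt hX1
    have hlow : κ * S ≤ Real.sqrt (4 * κ ^ 2 * ν ^ 2 + 4 * ν ^ 2 * s₁ ^ 2 + κ ^ 2 * b ^ 2) := by
      rw [show κ * S = Real.sqrt ((κ * S) ^ 2) from (Real.sqrt_sq (by positivity)).symm]
      apply Real.sqrt_le_sqrt
      nlinarith [hS2, sq_nonneg s₁, hν2]
    set R := Real.sqrt (4 * κ ^ 2 * ν ^ 2 + 4 * ν ^ 2 * s₁ ^ 2 + κ ^ 2 * b ^ 2) with hRdef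
    have hR0 : 0 ≤ R := Real.sqrt_nonneg _
    clear_value R
    have hstep : Real.sqrt (4 * κ ^ 2 * ν ^ 2 + 4 * ν ^ 2 * s₂ ^ 2 + κ ^ 2 * b ^ 2)
        ≤ R + (s₂ ^ 2 - s₁ ^ 2) * b := by
      rw [show 4 * κ ^ 2 * ν ^ 2 + 4 * ν ^ 2 * s₂ ^ 2 + κ ^ 2 * b ^ 2
          = (4 * κ ^ 2 * ν ^ 2 + 4 * ν ^ 2 * s₁ ^ 2 + κ ^ 2 * b ^ 2)
            + 4 * ν ^ 2 * (s₂ ^ 2 - s₁ ^ 2) by ring]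
      rw [hRdef]
      apply sqrt_add_le_aux _ _ _ (mul_nonneg hD hb0)
      rw [← hRdef]
      nlinarith [mul_le_mul_of_nonneg_right key hD,
        mul_le_mul_of_nonneg_right hlow (mul_nonneg hD hb0),
        sq_nonneg ((s₂ ^ 2 - s₁ ^ 2) * b)]
    show _ - _ ≤ _ - _
    rw [← hRdef]
    linarith
  refine ⟨mono, fun s hs => ?_⟩
  have h0 := mono (Set.self_mem_Ici) (Set.mem_Ici.2 hs) hs
  simp only at h0
  have hzero : Real.sqrt (4 * κ ^ 2 * ν ^ 2 + 4 * ν ^ 2 * (0:ℝ) ^ 2 + κ ^ 2 * b ^ 2)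
      = κ * S := by
    rw [show 4 * κ ^ 2 * ν ^ 2 + 4 * ν ^ 2 * (0:ℝ) ^ 2 + κ ^ 2 * b ^ 2 = (κ * S) ^ 2 by
      nlinarith [hS2]]
    exact Real.sqrt_sq (by positivity)
  rw [hzero] at h0
  linarith
end
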